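/- arXiv:1810.01536 — 9 statements merged into one kernel-verified Lean document; each statement's English description precedes it below -/
import Mathlib

section
/- Define for functions $h : \mathbb{Z} \to \mathbb{Z}$ and integers $a \leq b$: $h$ is an admissible column generated in degree $a$ (bounded by $b$) if (i) $h_n = 0$ iff $n < a$ or $n > b$, (ii) $h_a = 1$, (iii) for $a < n \leq b$: $h_n \leq n - a + 1$ if $h_{n-1} = n - a$, and $h_n \leq h_{n-1}$ if $h_{n-1} < n - a$. Let $u$ be an admissible column generated in degree $a$ with $u_n = 0$ for $n > b$, and let $v : \mathbb{Z} \to \mathbb{Z}_{\geq 0}$ satisfy: $v_n = 0$ for $n < a'$ and $n > b$ for some $a' \geq a$, $v_n \leq n - a + 1$ for $a' \leq n \leq b$, and $v_n > v_{n-1}$ for $a' \leq n \leq b$. Then $w$ defined by $w_n = \max(0, u_n - v_n)$ is an admissible column; moreover if $a' > a$ then $w$ is generated in degree $a$. -/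
/-- `h` is an admissible column generated in degree `a`, bounded by `b`:
non-negative integer values, vanishing exactly outside `[a,b]`, `h a = 1`,
and satisfying the Macaulay-type growth conditions in two variables. -/
def AdmissibleColumn (a b : ℤ) (h : ℤ → ℤ) : Prop :=
  (∀ n, 0 ≤ h n) ∧
  (∀ n, h n = 0 ↔ n < a ∨ b < n) ∧
  h a = 1 ∧
  ∀ n, a < n → n ≤ b →
    (h (n - 1) = n - a → h n ≤ n - a + 1) ∧
    (h (n - 1) < n - a → h n ≤ h (n - 1))

/-- subtracting a strictly increasing column `v`, supported in
`[a', b]` and bounded by `n - a + 1`, from an admissible column `u` generated in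
degree `a` yields (either the zero column or) an admissible column `w`, which is
still generated in degree `a` whenever `a' > a`. -/
theorem stmt3 (a b a' : ℤ) (u v : ℤ → ℤ)
    (hu : AdmissibleColumn a b u)
    (ha' : a ≤ a')
    (hv_nonneg : ∀ n, 0 ≤ v n)
    (hv_low : ∀ n, n < a' → v n = 0)
    (hv_high : ∀ n, b < n → v n = 0)
    (hv_bound : ∀ n, a' ≤ n → n ≤ b → v n ≤ n - a + 1)
    (hv_incr : ∀ n, a' ≤ n → n ≤ b → v (n - 1) < v n) :
    ((∀ n, max 0 (u n - v n) = 0) ∨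
      ∃ a₀ b₀, AdmissibleColumn a₀ b₀ (fun n => max 0 (u n - v n))) ∧
    (a < a' → ∃ b₀, AdmissibleColumn a b₀ (fun n => max 0 (u n - v n))) := by
  obtain ⟨hu0, huz, hua, hug⟩ := hu
  set w : ℤ → ℤ := fun n => max 0 (u n - v n) with hw
  have hwnn : ∀ n, 0 ≤ w n := fun n => le_max_left _ _
  have hwle : ∀ n, w n ≤ u n := fun n => max_le (hu0 n) (by have := hv_nonneg n; omega)
  have hab : a ≤ b := by
    by_contra h
    have := (huz a).2 (Or.inr (by omega))
    omega
  -- u n ≤ n - a + 1 for a ≤ n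
  have hB : ∀ n, a ≤ n → u n ≤ n - a + 1 := by
    have H : ∀ k : ℕ, u (a + k) ≤ (k : ℤ) + 1 := by
      intro k
      induction k with
      | zero => simpa using hua.le
      | succ k ih =>
        have e : a + ((k + 1 : ℕ) : ℤ) = a + (k : ℤ) + 1 := by push_cast; ring
        rw [e]
        push_cast
        by_cases hb : a + (k : ℤ) + 1 ≤ b
        · rcases hug (a + (k : ℤ) + 1) (by omega) hb with ⟨h1, h2⟩
          have hsub : a + (k : ℤ) + 1 - 1 = a + (k : ℤ) := by ring
          rw [hsub] at h1 h2
          rcases eq_or_lt_of_le (show u (a + (k : ℤ)) ≤ a + (k : ℤ) + 1 - a by omega)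
            with he | hl
          · have := h1 he; omega
          · have := h2 hl; omega
        · have := (huz (a + (k : ℤ) + 1)).2 (Or.inr (by omega)); omega
    intro n hn
    obtain ⟨k, rfl⟩ : ∃ k : ℕ, n = a + k := ⟨(n - a).toNat, by omega⟩
    have := H k
    omega
  -- u grows by at most 1
  have hC : ∀ n, n ≤ b → u n ≤ u (n - 1) + 1 := by
    intro n hn
    rcases lt_trichotomy n a with h | h | h
    · have h1 := (huz n).2 (Or.inl h); have h2 := hu0 (n - 1); omega
    · rw [h]; have := (huz (a - 1)).2 (Or.inl (by omega)); omega
    · have hb1 : u (n - 1) ≤ n - a := by have := hB (n - 1) (by omega); omega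
      rcases hug n h hn with ⟨h1, h2⟩
      rcases eq_or_lt_of_le hb1 with he | hl
      · have := h1 he; omega
      · have := h2 hl; omega
  -- w is nonincreasing on [a', b]
  have hmono : ∀ n, a' ≤ n → n ≤ b → w n ≤ w (n - 1) := by
    intro n h1 h2
    have hc := hC n h2
    have hi := hv_incr n h1 h2
    simp only [hw]
    exact max_le (le_max_left _ _)
      (le_trans (show u n - v n ≤ u (n - 1) - v (n - 1) by omega) (le_max_right _ _))
  have hchain : ∀ m, a' ≤ m → ∀ n, m ≤ n → n ≤ b → w n ≤ w m := by
    have H : ∀ k : ℕ, ∀ m, a' ≤ m → m + (k : ℤ) ≤ b → w (m + (k : ℤ)) ≤ w m := by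
      intro k
      induction k with
      | zero => intro m _ _; norm_num
      | succ k ih =>
        intro m hm hb
        have e : m + ((k + 1 : ℕ) : ℤ) = m + (k : ℤ) + 1 := by push_cast; ring
        rw [e] at hb ⊢
        have h1 : w (m + (k : ℤ) + 1) ≤ w (m + (k : ℤ) + 1 - 1) :=
          hmono _ (by omega) hb
        have h2 : m + (k : ℤ) + 1 - 1 = m + (k : ℤ) := by ring
        rw [h2] at h1
        exact le_trans h1 (ih m hm (by omega))
    intro m hm n hn hb
    obtain ⟨k, rfl⟩ : ∃ k : ℕ, n = m + k := ⟨(n - m).toNat, by omega⟩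
    exact H k m hm hb
  -- w supported in [a, b]
  have hsupp : ∀ n, w n ≠ 0 → a ≤ n ∧ n ≤ b := by
    intro n hn
    by_contra h
    have hz : u n = 0 := (huz n).2 (by omega)
    have := hwle n; have := hwnn n
    omega
  have hwlow : ∀ n, n < a → w n = 0 := by
    intro n hn
    by_contra h
    have := hsupp n h; omega
  -- the main construction for a < a'
  have key : a < a' → ∃ b₀, AdmissibleColumn a b₀ w := by
    intro haa
    have hwa : w a = 1 := by
      simp only [hw]
      rw [hv_low a haa, hua]
      simp
    obtain ⟨b₀, hb₀, hmax⟩ := Int.exists_greatest_of_bdd (P := fun n => w n ≠ 0)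
      ⟨b, fun z hz => (hsupp z hz).2⟩ ⟨a, show w a ≠ 0 by rw [hwa]; omega⟩
    have hb₀b : b₀ ≤ b := (hsupp b₀ hb₀).2
    have hab₀ : a ≤ b₀ := hmax a (show w a ≠ 0 by rw [hwa]; omega)
    refine ⟨b₀, hwnn, ?_, hwa, ?_⟩
    · intro n
      constructor
      · intro hz
        by_contra h
        push_neg at h
        obtain ⟨h1, h2⟩ := h
        by_cases hn : a' ≤ n
        · have := hchain n hn b₀ (by omega) hb₀b
          have := hwnn b₀
          exact hb₀ (by omega)
        · have hvz : v n = 0 := hv_low n (by omega)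
          have hun : u n ≠ 0 := by
            intro hc
            rcases (huz n).1 hc with h | h <;> omega
          have : w n = u n := by
            simp only [hw, hvz, sub_zero]
            exact max_eq_right (hu0 n)
          omega
      · intro h
        rcases h with h | h
        · exact hwlow n h
        · by_contra hc
          have := hmax n (show w n ≠ 0 from hc); omega
    · intro n hn1 hn2
      constructor
      · intro _
        exact le_trans (hwle n) (hB n (le_of_lt hn1))
      · intro hlt
        by_cases hn : a' ≤ n
        · exact hmono n hn (by omega)
        · have hv1 : v n = 0 := hv_low n (by omega)
          have hv2 : v (n - 1) = 0 := hv_low (n - 1) (by omega)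
          have e1 : w n = u n := by
            simp only [hw, hv1, sub_zero]; exact max_eq_right (hu0 n)
          have e2 : w (n - 1) = u (n - 1) := by
            simp only [hw, hv2, sub_zero]; exact max_eq_right (hu0 (n - 1))
          rcases hug n hn1 (by omega) with ⟨_, h2⟩
          rw [e1, e2]
          exact h2 (by omega)
  constructor
  · rcases lt_or_eq_of_le ha' with h | h
    · obtain ⟨b₀, hadm⟩ := key h
      exact Or.inr ⟨a, b₀, hadm⟩
    · left
      have hva : 1 ≤ v a := by
        have h1 := hv_incr a (le_of_eq h.symm) hab
        have h2 := hv_low (a - 1) (by omega)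
        have := hv_nonneg a
        omega
      have hwa0 : w a = 0 := by
        simp only [hw, hua]
        exact max_eq_left (by omega)
      intro n
      show w n = 0
      by_cases h1 : n < a
      · exact hwlow n h1
      · by_cases h2 : b < n
        · by_contra hc
          have := hsupp n hc; omega
        · have := hchain a (le_of_eq h.symm) n (by omega) (by omega)
          have := hwnn n
          omega
  · exact key
end

section
/- With the notation of the previous statement (admissible column $u$ generated in degree $a$, bounded by $b$; column $v$ with $v_n = 0$ for $n < a'$ and $n > b$, $v_n \leq n-a+1$ and $v_n > v_{n-1}$ for $a' \leq n \leq b$), define $z_n = \max(0, v_n - u_n)$. Then either $z = 0$, or there exists $a'' \geq a'$ such that $z_n > z_{n-1}$ for all $a'' \leq n \leq b$ and $z_n = 0$ for $n < a''$. -/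
/-- with `u, v` as in the previous statement and
`z n = max 0 (v n - u n)`, either `z = 0`, or there is `a'' ≥ a'` with
`z` strictly increasing on `[a'', b]` and vanishing below `a''`. -/
theorem stmt4 (a b a' : ℤ) (u v : ℤ → ℤ)
    (hu : AdmissibleColumn a b u)
    (ha' : a ≤ a')
    (hv_nonneg : ∀ n, 0 ≤ v n)
    (hv_low : ∀ n, n < a' → v n = 0)
    (hv_high : ∀ n, b < n → v n = 0)
    (hv_bound : ∀ n, a' ≤ n → n ≤ b → v n ≤ n - a + 1)
    (hv_incr : ∀ n, a' ≤ n → n ≤ b → v (n - 1) < v n) :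
    (∀ n, max 0 (v n - u n) = 0) ∨
      ∃ a'', a' ≤ a'' ∧
        (∀ n, a'' ≤ n → n ≤ b → max 0 (v (n - 1) - u (n - 1)) < max 0 (v n - u n)) ∧
        (∀ n, n < a'' → max 0 (v n - u n) = 0) := by
  classical
  obtain ⟨hu_nonneg, hu_supp, hu_a, hu_adm⟩ := hu
  -- every point where v n > u n lies in [a', b]
  have hmem : ∀ n, 0 < v n - u n → a' ≤ n ∧ n ≤ b := by
    intro n hn
    constructor
    · by_contra h
      push_neg at h
      have := hv_low n h
      have := hu_nonneg n
      omega
    · by_contra h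
      push_neg at h
      have := hv_high n h
      have := hu_nonneg n
      omega
  by_cases hS : ∃ n, 0 < v n - u n
  · right
    obtain ⟨a'', ha''S, ha''min⟩ := Int.exists_least_of_bdd
      (P := fun n => 0 < v n - u n) ⟨a', fun n hn => (hmem n hn).1⟩ hS
    have ha''a' : a' ≤ a'' := (hmem _ ha''S).1
    have ha''b : a'' ≤ b := (hmem _ ha''S).2
    -- key induction: for a'' ≤ n ≤ b, 0 < v n - u n and z (n-1) < z n
    have key : ∀ n, a'' ≤ n → n ≤ b →
        0 < v n - u n ∧ max 0 (v (n-1) - u (n-1)) < max 0 (v n - u n) := by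
      refine Int.le_induction ?_ ?_
      · intro _
        refine ⟨ha''S, ?_⟩
        have h1 : v (a'' - 1) - u (a'' - 1) ≤ 0 := by
          by_contra h
          push_neg at h
          have := ha''min _ h
          omega
        have : max 0 (v (a'' - 1) - u (a'' - 1)) = 0 := by omega
        rw [this]
        omega
      · intro n hn ih hnb
        have hnb' : n ≤ b := by omega
        obtain ⟨hpos, _⟩ := ih hnb'
        have hna' : a' ≤ n := (hmem n hpos).1
        have hvb : v n ≤ n - a + 1 := hv_bound n hna' hnb'
        have hun : u n < (n + 1) - a := by omega
        have hadm := (hu_adm (n + 1) (by omega) hnb).2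
        have : u (n + 1) ≤ u n := by
          have : ((n : ℤ) + 1) - 1 = n := by ring
          rw [this] at hadm
          exact hadm hun
        have hvstep : v n < v (n + 1) := by
          have := hv_incr (n + 1) (by omega) hnb
          have hn1 : ((n : ℤ) + 1) - 1 = n := by ring
          rwa [hn1] at this
        have hpos' : 0 < v (n + 1) - u (n + 1) := by omega
        refine ⟨hpos', ?_⟩
        have hn1 : ((n : ℤ) + 1) - 1 = n := by ring
        rw [hn1]
        omega
    refine ⟨a'', ha''a', ?_, ?_⟩
    · intro n hn hnb
      exact (key n hn hnb).2
    · intro n hn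
      have h1 : v n - u n ≤ 0 := by
        by_contra h
        push_neg at h
        have := ha''min _ h
        omega
      omega
  · left
    intro n
    push_neg at hS
    have := hS n
    omega
end

section
/- Every admissible column $h$ generated in degree $a$ with $h_n = 0$ for $n > b$ can be written as $h = \sum_{n=0}^{b-a} r_n K^{(n)}$ where $r_n \in \mathbb{Q}_{\geq 0}$, $\sum_{n=0}^{b-a} r_n = 1$, and $K^{(n)}$ is the column with $K^{(n)}_m = m - a + 1$ for $a \leq m \leq a + n$ and $0$ otherwise. -/
/-- every admissible column generated in degree `a`, vanishing above
`b`, is a convex (non-negative rational, coefficients summing to `1`) combination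
of the columns `K⁽ⁿ⁾`, where `K⁽ⁿ⁾ m = m - a + 1` for `a ≤ m ≤ a + n` and `0`
otherwise (`0 ≤ n ≤ b - a`). -/
theorem stmt6 (a b : ℤ) (h : ℤ → ℤ) (hadm : AdmissibleColumn a b h) :
    ∃ r : ℕ → ℚ, (∀ n, 0 ≤ r n) ∧
      (∑ n ∈ Finset.range ((b - a).toNat + 1), r n = 1) ∧
      ∀ m : ℤ, (h m : ℚ) =
        ∑ n ∈ Finset.range ((b - a).toNat + 1),
          r n * (if a ≤ m ∧ m ≤ a + (n : ℤ) then ((m - a + 1 : ℤ) : ℚ) else 0) := by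
  obtain ⟨hnn, hzero, hone, hgrow⟩ := hadm
  have hab : a ≤ b := by
    by_contra hc
    have := (hzero a).mpr (Or.inr (by omega))
    omega
  set N := (b - a).toNat with hN
  have hNb : a + (N : ℤ) = b := by omega
  -- upper bound h (a + n) ≤ n + 1
  have hbd : ∀ n : ℕ, h (a + n) ≤ (n : ℤ) + 1 := by
    intro n
    induction n with
    | zero => simpa using hone.le
    | succ n ih =>
      have ecast : a + ((n + 1 : ℕ) : ℤ) = a + n + 1 := by push_cast; ring
      rw [ecast]
      by_cases hb : a + (n : ℤ) + 1 ≤ b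
      · obtain ⟨h1, h2⟩ := hgrow (a + n + 1) (by omega) hb
        rw [show a + (n : ℤ) + 1 - 1 = a + n from by ring,
            show a + (n : ℤ) + 1 - a = (n : ℤ) + 1 from by ring] at h1 h2
        push_cast
        rcases eq_or_lt_of_le ih with he | hl
        · have := h1 he; linarith
        · have := h2 hl; linarith
      · have hz : h (a + (n : ℤ) + 1) = 0 := (hzero _).mpr (Or.inr (by omega))
        rw [hz]; push_cast; omega
  -- key inequality
  have key : ∀ n : ℕ, ((n : ℤ) + 1) * h (a + n + 1) ≤ ((n : ℤ) + 2) * h (a + n) := by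
    intro n
    by_cases hb : a + (n : ℤ) + 1 ≤ b
    · obtain ⟨h1, h2⟩ := hgrow (a + n + 1) (by omega) hb
      rw [show a + (n : ℤ) + 1 - 1 = a + n from by ring,
          show a + (n : ℤ) + 1 - a = (n : ℤ) + 1 from by ring] at h1 h2
      have hb1 := hbd n
      have hp := hnn (a + n)
      have hp1 := hnn (a + (n : ℤ) + 1)
      rcases eq_or_lt_of_le hb1 with he | hl
      · have := h1 he; nlinarith
      · have := h2 hl; nlinarith
    · have hz : h (a + (n : ℤ) + 1) = 0 := (hzero _).mpr (Or.inr (by omega))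
      rw [hz]
      have hp := hnn (a + n)
      nlinarith
  -- the weights
  set f : ℕ → ℚ := fun n => (h (a + n) : ℚ) / ((n : ℚ) + 1) with hf
  have hfmono : ∀ n : ℕ, f (n + 1) ≤ f n := by
    intro n
    have ecast : a + ((n + 1 : ℕ) : ℤ) = a + n + 1 := by push_cast; ring
    have : f (n + 1) = (h (a + n + 1) : ℚ) / ((n : ℚ) + 2) := by
      simp only [hf, ecast]; push_cast; ring_nf
    rw [this, hf]
    rw [div_le_div_iff₀ (by positivity) (by positivity)]
    have := key n
    have h1 : ((n : ℚ) + 1) * (h (a + (n : ℤ) + 1) : ℚ) ≤ ((n : ℚ) + 2) * (h (a + (n : ℤ)) : ℚ) := by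
      exact_mod_cast this
    nlinarith [h1]
  have hfz : f (N + 1) = 0 := by
    have ecast : a + ((N + 1 : ℕ) : ℤ) = b + 1 := by push_cast; omega
    have hz : h (b + 1) = 0 := (hzero _).mpr (Or.inr (by omega))
    simp only [hf, ecast, hz]
    simp
  have hf0 : f 0 = 1 := by
    simp [hf, hone]
  refine ⟨fun n => f n - f (n + 1), ?_, ?_, ?_⟩
  · intro n; exact sub_nonneg.mpr (hfmono n)
  · rw [Finset.sum_range_sub' f (N + 1), hf0, hfz]; ring
  · intro m
    rcases lt_or_ge m a with hm | hma
    · have hm0 : h m = 0 := (hzero m).mpr (Or.inl hm)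
      rw [hm0]
      symm
      push_cast
      apply Finset.sum_eq_zero
      intro n _
      rw [if_neg (by rintro ⟨h1, -⟩; omega), mul_zero]
    rcases lt_or_ge b m with hm | hmb
    · have hm0 : h m = 0 := (hzero m).mpr (Or.inr hm)
      rw [hm0]
      symm
      push_cast
      apply Finset.sum_eq_zero
      intro n hn
      rw [Finset.mem_range] at hn
      rw [if_neg (by rintro ⟨-, h2⟩; omega), mul_zero]
    · set t := (m - a).toNat with htdef
      have htm : m = a + (t : ℤ) := by omega
      have htN : t ≤ N := by omega
      have hcond : ∀ n ∈ Finset.range (N + 1),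
          (f n - f (n + 1)) * (if a ≤ m ∧ m ≤ a + (n : ℤ) then ((m - a + 1 : ℤ) : ℚ) else 0)
          = if t ≤ n then ((t : ℚ) + 1) * (f n - f (n + 1)) else 0 := by
        intro n _
        by_cases hc : t ≤ n
        · rw [if_pos hc, if_pos ⟨hma, by omega⟩]
          rw [show (m - a + 1 : ℤ) = (t : ℤ) + 1 from by omega]
          push_cast
          ring
        · rw [if_neg hc, if_neg (by rintro ⟨-, h2⟩; omega), mul_zero]
      rw [Finset.sum_congr rfl hcond]
      have hfilter : (Finset.range (N + 1)).filter (fun n => t ≤ n) = Finset.Ico t (N + 1) := by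
        ext x
        simp only [Finset.mem_filter, Finset.mem_range, Finset.mem_Ico]
        omega
      rw [← Finset.sum_filter, hfilter, ← Finset.mul_sum]
      rw [Finset.sum_Ico_eq_sub _ (by omega : t ≤ N + 1)]
      rw [Finset.sum_range_sub' f (N + 1), Finset.sum_range_sub' f t, hfz]
      have hft : ((t : ℚ) + 1) * f t = (h m : ℚ) := by
        rw [hf, htm]
        field_simp
      rw [show f 0 - 0 - (f 0 - f t) = f t from by ring, hft]
end

section
/- Call $t : \mathbb{Z} \to \mathbb{Z}_{\geq 0}$ a monotone column if $t_n \geq t_{n+1}$ for all $n$. Let $h = t + h_1 + \cdots + h_s$ where $t$ is a monotone column with finite support in degrees $\geq a_s$ and each $h_i$ is an admissible column generated in degree $a_i$, with $a_1 \leq \cdots \leq a_s$, all supported in degrees $\leq b$. Let $k$ be the pointwise maximal admissible column generated in degree $a_s$ with $k \leq h$, i.e. $k_n = \min(h_n, n - a_s + 1)$ for $n \geq a_s$ and $0$ otherwise, and set $c = \min\{n \geq a_s : k_n \leq k_{n-1}\}$ (with $c = b+1$ if no such $n$ exists with $n \leq b$). Then $k_n = h_n$ for all $n \geq c$. -/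
/-- Claim 1 in Lemma `lemma_maximal`: if `h = t + h₁ + ⋯ + hₛ`
with `t` monotone supported in `[aₛ, b]` and each `hᵢ` admissible generated in
degree `aᵢ` (with `a₁ ≤ ⋯ ≤ aₛ`, all supported in degrees `≤ b`), and `k` is the
maximal admissible column generated in degree `aₛ` with `k ≤ h`, and `c` is the
first degree `≥ aₛ` where `k` fails to strictly increase (`c = b + 1` if none),
then `k n = h n` for all `n ≥ c`. -/
theorem stmt7 (s : ℕ) (hs : 0 < s) (a : Fin s → ℤ) (amono : Monotone a)
    (b : ℤ) (t : ℤ → ℤ)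
    (ht_nonneg : ∀ n, 0 ≤ t n)
    (ht_mono : ∀ n, t (n + 1) ≤ t n)
    (ht_low : ∀ n, n < a ⟨s - 1, by omega⟩ → t n = 0)
    (ht_high : ∀ n, b < n → t n = 0)
    (H : Fin s → ℤ → ℤ)
    (hH : ∀ i, ∃ bᵢ, bᵢ ≤ b ∧ AdmissibleColumn (a i) bᵢ (H i))
    (h : ℤ → ℤ) (hdef : ∀ n, h n = t n + ∑ i, H i n)
    (k : ℤ → ℤ)
    (hk : ∀ n, k n = if a ⟨s - 1, by omega⟩ ≤ n
      then min (h n) (n - a ⟨s - 1, by omega⟩ + 1) else 0)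
    (c : ℤ)
    (hc : (a ⟨s - 1, by omega⟩ ≤ c ∧ c ≤ b ∧ k c ≤ k (c - 1) ∧
            ∀ n, a ⟨s - 1, by omega⟩ ≤ n → n < c → k (n - 1) < k n) ∨
          (c = b + 1 ∧ ∀ n, a ⟨s - 1, by omega⟩ ≤ n → n ≤ b → k (n - 1) < k n)) :
    ∀ n, c ≤ n → k n = h n := by
  have hsl : s - 1 < s := by omega
  set A : ℤ := a ⟨s - 1, hsl⟩ with hAdef
  have hk' : ∀ n, k n = if A ≤ n then min (h n) (n - A + 1) else 0 := hk
  have hc' : (A ≤ c ∧ c ≤ b ∧ k c ≤ k (c - 1) ∧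
            ∀ n, A ≤ n → n < c → k (n - 1) < k n) ∨
          (c = b + 1 ∧ ∀ n, A ≤ n → n ≤ b → k (n - 1) < k n) := hc
  choose bi hbib hadm using hH
  have Hnn : ∀ i n, 0 ≤ H i n := fun i => (hadm i).1
  have Hzero : ∀ i n, H i n = 0 ↔ n < a i ∨ bi i < n := fun i => (hadm i).2.1
  have haib : ∀ i, a i ≤ bi i := by
    intro i
    by_contra hlt
    have h1 : H i (a i) = 1 := (hadm i).2.2.1
    have h0 : H i (a i) = 0 := (Hzero i (a i)).2 (Or.inr (by omega))
    omega
  have haiA : ∀ i, a i ≤ A := by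
    intro i
    exact amono (by simp [Fin.le_def]; omega)
  have hAb : A ≤ b := le_trans (haib _) (hbib _)
  have hHh : ∀ i n, H i n ≤ h n := by
    intro i n
    rw [hdef n]
    have : H i n ≤ ∑ j, H j n :=
      Finset.single_le_sum (fun j _ => Hnn j n) (Finset.mem_univ i)
    linarith [ht_nonneg n]
  have hhnn : ∀ n, 0 ≤ h n := by
    intro n
    rw [hdef n]
    have : (0:ℤ) ≤ ∑ j, H j n := Finset.sum_nonneg fun j _ => Hnn j n
    linarith [ht_nonneg n]
  have hhigh : ∀ n, b < n → h n = 0 := by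
    intro n hn
    rw [hdef n, ht_high n hn, Finset.sum_eq_zero fun i _ =>
      (Hzero i n).2 (Or.inr (lt_of_le_of_lt (hbib i) hn))]
    ring
  -- key step: if h n ≤ n - A then h (n+1) ≤ h n
  have step : ∀ n, A ≤ n → h n ≤ n - A → h (n + 1) ≤ h n := by
    intro n hAn hn
    rw [hdef n, hdef (n + 1)]
    have hsum : ∀ i, H i (n + 1) ≤ H i n := by
      intro i
      by_cases hbn : bi i < n + 1
      · have : H i (n + 1) = 0 := (Hzero i (n + 1)).2 (Or.inr hbn)
        rw [this]; exact Hnn i n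
      · have h1 : a i < n + 1 := by have := haiA i; omega
        have h2 : n + 1 ≤ bi i := by omega
        have := ((hadm i).2.2.2 (n + 1) h1 h2).2
        rw [show (n + 1 - 1 : ℤ) = n by ring] at this
        apply this
        have := hHh i n
        have := haiA i
        omega
    have : ∑ i, H i (n + 1) ≤ ∑ i, H i n :=
      Finset.sum_le_sum fun i _ => hsum i
    linarith [ht_mono n]
  -- base: h c ≤ c - A  and A ≤ c
  have hAc : A ≤ c := by
    rcases hc' with ⟨h1, _⟩ | ⟨h1, _⟩ <;> omega
  have hbase : h c ≤ c - A := by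
    rcases hc' with ⟨h1, h2, h3, h4⟩ | ⟨h1, _⟩
    · -- strict increase up to c forces k m = m - A + 1 for A - 1 ≤ m < c
      have klow : ∀ N : ℕ, ∀ m : ℤ, m = A - 1 + N → m < c → m - A + 1 ≤ k m := by
        intro N
        induction N with
        | zero => intro m hm _; rw [hk' m]; simp only [show ¬ A ≤ m by omega, if_false]; omega
        | succ N ih =>
          intro m hm hmc
          have hprev : (m - 1) - A + 1 ≤ k (m - 1) := ih (m - 1) (by push_cast at hm ⊢; omega)
            (by omega)
          have : k (m - 1) < k m := h4 m (by omega) hmc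
          omega
      have hk1 : c - A ≤ k (c - 1) := by
        have hN : (0:ℤ) ≤ c - 1 - (A - 1) := by omega
        have := klow (c - 1 - (A - 1)).toNat (c - 1) (by omega) (by omega)
        omega
      have hkup : k (c - 1) ≤ c - A := by
        rw [hk' (c - 1)]
        by_cases hA1 : A ≤ c - 1
        · simp only [hA1, if_true]
          have := min_le_right (h (c - 1)) (c - 1 - A + 1)
          omega
        · simp only [hA1, if_false]; omega
      have hk2 : k c ≤ c - A := le_trans h3 hkup
      rw [hk' c] at hk2
      simp only [hAc, if_true] at hk2
      rcases min_cases (h c) (c - A + 1) with ⟨he, _⟩ | ⟨he, _⟩ <;> omega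
    · have : h c = 0 := hhigh c (by omega)
      omega
  -- induction upward: h n ≤ n - A for all n ≥ c
  have hup : ∀ N : ℕ, h (c + N) ≤ c + N - A := by
    intro N
    induction N with
    | zero => simpa using hbase
    | succ N ih =>
      have hA : A ≤ c + N := by have : (0:ℤ) ≤ (N:ℤ) := Nat.cast_nonneg N; omega
      have := step (c + N) hA ih
      push_cast
      push_cast at ih
      rw [show c + ((N:ℤ) + 1) = c + (N:ℤ) + 1 by ring]
      omega
  intro n hn
  have hle : h n ≤ n - A := by
    have := hup (n - c).toNat
    rw [show (c + ((n - c).toNat : ℤ)) = n by omega] at this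
    omega
  rw [hk' n]
  simp only [show A ≤ n by omega, if_true]
  omega
end

section
/- Let $h$ be an admissible column generated in degree $a_1$, let $a > a_1$ with $h_a > 0$, and let $k$ be the maximal admissible column generated in degree $a$ with $k \leq h$, namely $k_n = \min(h_n, n - a + 1)$ for $n \geq a$, $k_n = 0$ for $n < a$. Then $w = h - k$ is an admissible column generated in degree $a_1$. -/
/-- key claim in Lemma `lemma extra generator`: if `h` is an
admissible column generated in degree `a₁`, `a > a₁` with `h a > 0`, and `k` is
the maximal admissible column generated in degree `a` with `k ≤ h`, namely
`k n = min (h n) (n - a + 1)` for `n ≥ a` and `0` below, then `w = h - k` is an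
admissible column generated in degree `a₁`. -/
theorem stmt8 (a₁ b a : ℤ) (h : ℤ → ℤ)
    (hadm : AdmissibleColumn a₁ b h)
    (hlt : a₁ < a) (hpos : 0 < h a)
    (k : ℤ → ℤ)
    (hk : ∀ n, k n = if a ≤ n then min (h n) (n - a + 1) else 0) :
    ∃ b', AdmissibleColumn a₁ b' (fun n => h n - k n) := by
  obtain ⟨hnn, hsupp, hgen, hgrow⟩ := hadm
  have hab : a ≤ b := by
    by_contra hc
    have := (hsupp a).2 (Or.inr (by omega))
    omega
  -- upper bound on h
  have hub : ∀ m, a₁ ≤ m → h m ≤ m - a₁ + 1 := by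
    intro m hm
    refine Int.le_induction (motive := fun m _ => h m ≤ m - a₁ + 1) ?_ ?_ m hm
    · omega
    · intro n hn IH
      by_cases hb1 : n + 1 ≤ b
      · have hg := hgrow (n + 1) (by omega) hb1
        have e : (n + 1 : ℤ) - 1 = n := by ring
        rw [e] at hg
        rcases lt_trichotomy (h n) (n + 1 - a₁) with hlt' | heq | hgt
        · have := hg.2 hlt'; omega
        · have := hg.1 heq; omega
        · omega
      · have := (hsupp (n + 1)).2 (Or.inr (by omega)); omega
  -- h grows by at most 1
  have hstep : ∀ n, a₁ < n → n ≤ b → h n ≤ h (n - 1) + 1 := by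
    intro n h1 h2
    have hub' := hub (n - 1) (by omega)
    have hg := hgrow n h1 h2
    rcases eq_or_lt_of_le (show h (n - 1) ≤ n - a₁ by omega) with heq | hl
    · have := hg.1 heq; omega
    · have := hg.2 hl; omega
  -- h n - n is non-increasing
  have hmono : ∀ m n, a ≤ m → m ≤ n → n ≤ b → h n - n ≤ h m - m := by
    intro m n ham hmn
    refine Int.le_induction (motive := fun n _ => n ≤ b → h n - n ≤ h m - m) ?_ ?_ n hmn
    · intro _; omega
    · intro p hp IH
      intro hpb
      have hs := hstep (p + 1) (by omega) hpb
      have e : (p + 1 : ℤ) - 1 = p := by ring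
      rw [e] at hs
      have := IH (by omega)
      omega
  -- choose b'
  obtain ⟨b', hb'low, hb'hi, hP2, hP3⟩ :
      ∃ b', a - 1 ≤ b' ∧ b' ≤ b ∧ (∀ n, a ≤ n → n ≤ b' → n - a + 1 < h n) ∧
        (∀ n, a ≤ n → n ≤ b → b' < n → h n ≤ n - a + 1) := by
    by_cases hex : ∃ n, a ≤ n ∧ n ≤ b ∧ n - a + 1 < h n
    · obtain ⟨lub, ⟨hl1, hl2, hl3⟩, hmax⟩ :=
        Int.exists_greatest_of_bdd (P := fun n => a ≤ n ∧ n ≤ b ∧ n - a + 1 < h n)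
          ⟨b, fun z hz => hz.2.1⟩ hex
      refine ⟨lub, by omega, hl2, ?_, ?_⟩
      · intro n hn1 hn2
        have := hmono n lub hn1 hn2 hl2
        omega
      · intro n hn1 hn2 hn3
        by_contra hc
        have := hmax n ⟨hn1, hn2, by omega⟩
        omega
    · refine ⟨a - 1, le_refl _, by omega, ?_, ?_⟩
      · intro n hn1 hn2; omega
      · intro n hn1 hn2 _
        by_contra hc
        exact hex ⟨n, hn1, hn2, by omega⟩
  refine ⟨b', ?_, ?_, ?_, ?_⟩
  · -- nonnegativity
    intro n
    simp only [hk]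
    split_ifs with hcn
    · have := min_le_left (h n) (n - a + 1); omega
    · have := hnn n; omega
  · -- support
    intro n
    simp only [hk]
    split_ifs with hcn
    · rcases le_total (h n) (n - a + 1) with hmn | hmn
      · rw [min_eq_left hmn]
        have hx : b' < n := by
          by_contra hc
          have := hP2 n hcn (by omega)
          omega
        omega
      · rw [min_eq_right hmn]
        constructor
        · intro hw
          have hx : b' < n := by
            by_contra hc
            have := hP2 n hcn (by omega)
            omega
          omega
        · intro hor
          by_cases hnb : n ≤ b
          · have := hP3 n hcn hnb (by omega)
            omega
          · have h0 := (hsupp n).2 (Or.inr (by omega)); omega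
    · simp only [sub_zero]
      rw [hsupp n]
      omega
  · -- generator
    show h a₁ - k a₁ = 1
    rw [hk a₁, if_neg (by omega : ¬ a ≤ a₁)]
    omega
  · -- growth
    intro n hn1 hn2
    have hnb : n ≤ b := by omega
    rcases lt_trichotomy n a with hna | hna | hna
    · have e1 : k n = 0 := by rw [hk]; exact if_neg (by omega)
      have e2 : k (n - 1) = 0 := by rw [hk]; exact if_neg (by omega)
      simp only [e1, e2, sub_zero]
      exact hgrow n hn1 hnb
    · subst hna
      have e1 : k n = 1 := by
        rw [hk, if_pos le_rfl]
        have e : n - n + 1 = 1 := by ring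
        rw [e]
        exact min_eq_right (by omega)
      have e2 : k (n - 1) = 0 := by rw [hk]; exact if_neg (by omega)
      have key := hstep n hlt hab
      simp only [e1, e2, sub_zero]
      constructor <;> intro hyp <;> omega
    · have d1 : n - a + 1 < h n := hP2 n (by omega) hn2
      have d2 : (n - 1) - a + 1 < h (n - 1) := hP2 (n - 1) (by omega) (by omega)
      have e1 : k n = n - a + 1 := by
        rw [hk, if_pos (by omega)]; exact min_eq_right (by omega)
      have e2 : k (n - 1) = (n - 1) - a + 1 := by
        rw [hk, if_pos (by omega)]; exact min_eq_right (by omega)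
      have key := hstep n (by omega) hnb
      simp only [e1, e2]
      constructor <;> intro hyp <;> omega
end

section
/- Let $\mathbb{M}_{[0,d]}$ be the space of matrices $A = (a_{i,j})$, $i \in \{0,1,2\}$, $j \in \{0,\ldots,d\}$. Define the functionals $\phi_i(A) = a_{2,i}$ and, for $n \geq 0$ and $s$, $\pi_{n,s}(A) = \sum_{j > s+n} a_{1,j} + (n+1) a_{1,s+n} + \sum_{i=0}^{n-1} (i+1) a_{2,s+i}$ (sums over indices in $[0,d]$). Then for all $0 \leq i < d$ and $k > 0$ with $k + i < d$, the identity $\phi_i + 2\pi_{k, i+1} = \pi_{k+1, i} + \pi_{k-1, i+2}$ holds as linear functionals on $\mathbb{M}_{[0,d]}$. -/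
/-- The functional `φ_i(A) = a_{2,i}`. -/
def phiFun (A : ℕ → ℕ → ℚ) (i : ℕ) : ℚ := A 2 i

/-- The functional `π_{n,s}` on matrices with columns `0, …, d`:
`π_{n,s}(A) = ∑_{j > s+n, j ≤ d} a_{1,j} + (n+1) a_{1,s+n} + ∑_{i=0}^{n-1} (i+1) a_{2,s+i}`. -/
def piFun (d : ℕ) (A : ℕ → ℕ → ℚ) (n s : ℕ) : ℚ :=
  (∑ j ∈ Finset.Ioc (s + n) d, A 1 j) + ((n : ℚ) + 1) * A 1 (s + n) +
    ∑ i ∈ Finset.range n, ((i : ℚ) + 1) * A 2 (s + i)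

lemma key (f : ℕ → ℚ) (m : ℕ) :
    f 0 + 2 * ∑ j ∈ Finset.range (m + 1), ((j : ℚ) + 1) * f (j + 1)
      = (∑ j ∈ Finset.range (m + 2), ((j : ℚ) + 1) * f j)
        + ∑ j ∈ Finset.range m, ((j : ℚ) + 1) * f (j + 2) := by
  induction m with
  | zero =>
      rw [Finset.sum_range_one, Finset.sum_range_zero,
        show (0 : ℕ) + 2 = 2 from rfl, Finset.sum_range_succ, Finset.sum_range_one]
      push_cast; ring
  | succ n ih =>
      have h1 : ∑ j ∈ Finset.range (n + 1 + 1), ((j : ℚ) + 1) * f (j + 1)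
          = (∑ j ∈ Finset.range (n + 1), ((j : ℚ) + 1) * f (j + 1)) + ((n : ℚ) + 2) * f (n + 2) := by
        rw [Finset.sum_range_succ, show n + 1 + 1 = n + 2 from rfl]; push_cast; ring
      have h2 : ∑ j ∈ Finset.range (n + 1 + 2), ((j : ℚ) + 1) * f j
          = (∑ j ∈ Finset.range (n + 2), ((j : ℚ) + 1) * f j) + ((n : ℚ) + 3) * f (n + 2) := by
        rw [show n + 1 + 2 = (n + 2) + 1 from rfl, Finset.sum_range_succ]; push_cast; ring
      have h3 : ∑ j ∈ Finset.range (n + 1), ((j : ℚ) + 1) * f (j + 2)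
          = (∑ j ∈ Finset.range n, ((j : ℚ) + 1) * f (j + 2)) + ((n : ℚ) + 1) * f (n + 2) := by
        rw [Finset.sum_range_succ]
      rw [h1, h2, h3]
      linear_combination ih

/-- first triangular identity:
`φ_i + 2 π_{k, i+1} = π_{k+1, i} + π_{k-1, i+2}` for `0 ≤ i < d`, `k > 0`, `k + i < d`. -/
theorem stmt9 (d : ℕ) (A : ℕ → ℕ → ℚ) (i k : ℕ)
    (hi : i < d) (hk : 0 < k) (hki : k + i < d) :
    phiFun A i + 2 * piFun d A k (i + 1) = piFun d A (k + 1) i + piFun d A (k - 1) (i + 2) := by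
  obtain ⟨m, rfl⟩ : ∃ m, k = m + 1 := ⟨k - 1, by omega⟩
  simp only [phiFun, piFun, Nat.add_sub_cancel]
  have e1 : i + 1 + (m + 1) = i + (m + 1 + 1) := by omega
  have e2 : i + 2 + m = i + (m + 1 + 1) := by omega
  rw [e1, e2]
  have s1 : ∑ j ∈ Finset.range (m + 1), ((j : ℚ) + 1) * A 2 (i + 1 + j)
      = ∑ j ∈ Finset.range (m + 1), ((j : ℚ) + 1) * (fun t => A 2 (i + t)) (j + 1) :=
    Finset.sum_congr rfl fun j _ => by rw [show i + 1 + j = i + (j + 1) from by omega]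
  have s2 : ∑ j ∈ Finset.range m, ((j : ℚ) + 1) * A 2 (i + 2 + j)
      = ∑ j ∈ Finset.range m, ((j : ℚ) + 1) * (fun t => A 2 (i + t)) (j + 2) :=
    Finset.sum_congr rfl fun j _ => by rw [show i + 2 + j = i + (j + 2) from by omega]
  rw [s1, s2]
  have h := key (fun t => A 2 (i + t)) m
  simp only [Nat.add_zero] at h
  push_cast
  linarith [h]
end

section
/- Let $R = k[x]$ with $\mathfrak{m} = (x)$. The local cohomology table $[\operatorname{H}^\bullet_\mathfrak{m}(k(a))]$ is not a finite non-negative rational combination of tables $[\operatorname{H}^\bullet_\mathfrak{m}(k(r))]$ with $r \neq a$ and $[\operatorname{H}^\bullet_\mathfrak{m}(k[x](s))]$ with $s \in \mathbb{Z}$. Concretely: the table of $k(a)$ has $h^0_{-a} = 1$, $h^0_j = 0$ for $j \neq -a$, $h^1 \equiv 0$; the table of $k[x](s)$ has $h^0 \equiv 0$ and $h^1_j = 1$ for $j \leq -s-1$, $0$ otherwise. No finite non-negative rational combination of the latter tables (and tables of $k(r)$, $r \neq a$) equals the former. -/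
/-- The local cohomology table of `k(r)` over `k[x]`: `h⁰_{-r} = 1`, all other
entries `0`. A table is a function on `ℤ × Fin 2` (degree, cohomological index). -/
def Tk (r : ℤ) : ℤ × Fin 2 → ℚ :=
  fun p => if p.2 = 0 ∧ p.1 = -r then 1 else 0

/-- The local cohomology table of `k[x](s)` over `k[x]`: `h¹_j = 1` for
`j ≤ -s-1`, all other entries `0`. -/
def Tkx (s : ℤ) : ℤ × Fin 2 → ℚ :=
  fun p => if p.2 = 1 ∧ p.1 ≤ -s - 1 then 1 else 0

/-- the table of `k(a)` is not a finite non-negative rational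
combination of tables of `k(r)` (`r ≠ a`) and `k[x](s)` (`s ∈ ℤ`). -/
theorem stmt15 (a : ℤ) :
    ¬ ∃ (c e : ℤ → ℚ),
      (Function.support c).Finite ∧ (Function.support e).Finite ∧
      (∀ r, 0 ≤ c r) ∧ (∀ s, 0 ≤ e s) ∧ c a = 0 ∧
      ∀ p : ℤ × Fin 2, Tk a p = (∑ᶠ r, c r * Tk r p) + ∑ᶠ s, e s * Tkx s p := by
  rintro ⟨c, e, hc, he, hcn, hen, hca, heq⟩
  have h := heq (-a, 0)
  simp only [Tk, Tkx] at h
  norm_num at h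
  have h1 : (∑ᶠ r : ℤ, if a = r then c r else 0) = c a := by
    rw [finsum_eq_single _ a (fun b hb => by simp [Ne.symm hb])]; simp
  rw [h1, hca] at h
  exact one_ne_zero h
end

section
/- Define tables in the space of functions $\mathbb{Z} \times \{0,1\} \to \mathbb{Q}$: $T_{k(r)}$ has value $1$ at $(−r, 0)$ and $0$ elsewhere; $T_{k[x](s)}$ has value $1$ at $(j,1)$ for all $j \leq -s-1$ and $0$ elsewhere. Then for any $a \in \mathbb{Z}$, $T_{k[x](a)}$ cannot be written as a finite non-negative rational combination of tables $T_{k(r)}$ ($r \in \mathbb{Z}$) and $T_{k[x](s)}$ ($s \neq a$). -/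
/-- the table of `k[x](a)` is not a finite non-negative rational
combination of tables of `k(r)` (`r ∈ ℤ`) and `k[x](s)` (`s ≠ a`). -/
theorem stmt16 (a : ℤ) :
    ¬ ∃ (c e : ℤ → ℚ),
      (Function.support c).Finite ∧ (Function.support e).Finite ∧
      (∀ r, 0 ≤ c r) ∧ (∀ s, 0 ≤ e s) ∧ e a = 0 ∧
      ∀ p : ℤ × Fin 2, Tkx a p = (∑ᶠ r, c r * Tk r p) + ∑ᶠ s, e s * Tkx s p := by
  rintro ⟨c, e, hc, he, hcn, hen, hea, h⟩
  have h1 := h (-a - 1, 1)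
  have h0 := h (-a, 1)
  have hck : ∀ j : ℤ, (∑ᶠ r, c r * Tk r (j, 1)) = 0 := by
    intro j
    have : (fun r => c r * Tk r (j, 1)) = fun _ => (0 : ℚ) := by
      funext r; simp [Tk]
    rw [this, finsum_zero]
  have hS : (∑ᶠ s, e s * Tkx s (-a - 1, 1)) = ∑ᶠ s, e s * Tkx s (-a, 1) := by
    apply finsum_congr
    intro s
    by_cases hs : s = a
    · subst hs; simp [hea]
    · have hiff : (-a - 1 ≤ -s - 1) ↔ (-a ≤ -s - 1) := by omega
      simp only [Tkx, hiff]
  have hL1 : Tkx a (-a - 1, 1) = 1 := by simp [Tkx]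
  have hL0 : Tkx a (-a, 1) = 0 := by
    simp only [Tkx]
    rw [if_neg]
    rintro ⟨-, hle⟩
    omega
  rw [hck, hS, hL1] at h1
  rw [hck, hL0] at h0
  rw [← h0] at h1
  norm_num at h1
end

section
/- Over $R = k[x,y]$ with $\mathfrak{m} = (x,y)$, for $n \geq 1$ define the table $T_n$ (of $\mathfrak{m}^n$): $h^0 \equiv 0$; $h^1_j = j+1$ for $0 \leq j \leq n-1$ and $0$ otherwise; $h^2_j = -j-1$ for $j \leq -2$ and $0$ otherwise. Define $T_0$ (of $R$) with $h^0 \equiv 0$, $h^1 \equiv 0$, $h^2_j = -j-1$ for $j \leq -2$. Then for each $n \geq 0$, $T_n$ is not a finite non-negative rational combination of the tables $T_t$ with $0 \leq t < n$. -/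
/-- The local cohomology table of `𝔪ⁿ` over `k[x,y]` (with `𝔪⁰ = R`):
`h⁰ ≡ 0`; `h¹_j = j + 1` for `0 ≤ j ≤ n - 1`, else `0`;
`h²_j = -j - 1` for `j ≤ -2`, else `0`. -/
def Tm (n : ℕ) : ℤ × Fin 3 → ℚ :=
  fun p =>
    if p.2 = 1 then (if 0 ≤ p.1 ∧ p.1 ≤ (n : ℤ) - 1 then (p.1 : ℚ) + 1 else 0)
    else if p.2 = 2 then (if p.1 ≤ -2 then -(p.1 : ℚ) - 1 else 0)
    else 0

/-- for each `n ≥ 0`, the table `Tm n` of `𝔪ⁿ` is not a finite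
non-negative rational combination of the tables `Tm t` with `0 ≤ t < n`. -/
theorem stmt17 (n : ℕ) :
    ¬ ∃ c : ℕ → ℚ, (∀ t, 0 ≤ c t) ∧
      ∀ p : ℤ × Fin 3, Tm n p = ∑ t ∈ Finset.range n, c t * Tm t p := by
  rintro ⟨c, -, hc⟩
  rcases Nat.eq_zero_or_pos n with rfl | hn
  · have h := hc (-2, 2)
    norm_num [Tm] at h
    exact absurd h (by decide)
  · have h := hc ((n : ℤ) - 1, 1)
    have hL : Tm n ((n : ℤ) - 1, 1) = (n : ℚ) := by
      have h1 : (0 : ℤ) ≤ (n : ℤ) - 1 := by omega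
      simp only [Tm, if_pos, h1, le_refl, and_self, if_true, reduceIte]
      push_cast
      ring
    have hR : ∀ t ∈ Finset.range n, c t * Tm t ((n : ℤ) - 1, 1) = 0 := by
      intro t ht
      simp only [Finset.mem_range] at ht
      have : ¬ ((0 : ℤ) ≤ (n : ℤ) - 1 ∧ (n : ℤ) - 1 ≤ (t : ℤ) - 1) := by
        push_neg
        intro _
        omega
      simp only [Tm, reduceIte, if_neg this, mul_zero]
    rw [hL, Finset.sum_eq_zero hR] at h
    have : (n : ℚ) ≠ 0 := by positivity
    exact this h
end
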